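/- Let X be a closed linear subspace of a complex Banach space Y and let β ≥ 1. Let X^⊥ = {f ∈ Y* : f(x) = 0 for all x ∈ X} and X^⊥⊥ = {F ∈ Y** : F(f) = 0 for all f ∈ X^⊥}. Then the following are equivalent: (a) there exists a bounded linear projection P : Y** → Y** with ‖P‖ ≤ β and kernel equal to X^⊥⊥; (b) there exists a bounded linear projection Q : Y* → Y* with ‖Q‖ ≤ β and range equal to X^⊥. -/

import Mathlib

namespace NormedSpace

variable (𝕜 : Type*) [NontriviallyNormedField 𝕜] (E : Type*) [SeminormedAddCommGroup E]
  [NormedSpace 𝕜 E]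

/-- The topological dual of a seminormed space `E` (as `NormedSpace.Dual` was in Mathlib). -/
def Dual :=
  E →L[𝕜] 𝕜

noncomputable instance : SeminormedAddCommGroup (Dual 𝕜 E) :=
  ContinuousLinearMap.toSeminormedAddCommGroup

noncomputable instance : NormedSpace 𝕜 (Dual 𝕜 E) :=
  ContinuousLinearMap.toNormedSpace

instance : FunLike (Dual 𝕜 E) E 𝕜 :=
  ContinuousLinearMap.funLike

instance : ContinuousLinearMapClass (Dual 𝕜 E) 𝕜 E 𝕜 :=
  ContinuousLinearMap.continuousSemilinearMapClass

end NormedSpace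

/-!
The two conditions are exchanged by transposition. From `Q` on `Y*` one gets `P = Q*` on `Y**`,
whose kernel is the annihilator of `range Q = X^⊥`, i.e. `X^⊥⊥`. From `P` on `Y**` one gets
`Q f = (P* f)|_Y`, that is `(Q f) y = (P y) f`: it kills `X` because `X ⊆ X^⊥⊥ = ker P`, and it
fixes `X^⊥` because `y - P y ∈ ker P` is annihilated by every `f ∈ X^⊥`. Transposition and
restriction to `Y ⊆ Y**` do not increase norms.
-/

noncomputable section

namespace NormedSpace

variable {𝕜 E F : Type*} [NontriviallyNormedField 𝕜] [SeminormedAddCommGroup E] [NormedSpace 𝕜 E]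
  [SeminormedAddCommGroup F] [NormedSpace 𝕜 F]

def dualMap (T : E →L[𝕜] F) : Dual 𝕜 F →L[𝕜] Dual 𝕜 E :=
  (ContinuousLinearMap.compL 𝕜 E F 𝕜).flip T

theorem norm_dualMap_le (T : E →L[𝕜] F) : ‖dualMap T‖ ≤ ‖T‖ :=
  calc ‖dualMap T‖ ≤ ‖(ContinuousLinearMap.compL 𝕜 E F 𝕜).flip‖ * ‖T‖ :=
        ContinuousLinearMap.le_opNorm _ T
    _ ≤ 1 * ‖T‖ := by
        gcongr
        rw [ContinuousLinearMap.opNorm_flip]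
        exact ContinuousLinearMap.norm_compL_le 𝕜 E F 𝕜
    _ = ‖T‖ := one_mul _

theorem dualMap_dualMap_of_idem {T : E →L[𝕜] E} (hT : ∀ x, T (T x) = T x) (f : Dual 𝕜 E) :
    dualMap T (dualMap T f) = dualMap T f :=
  ContinuousLinearMap.ext fun x => congrArg f (hT x)

theorem dualMap_eq_zero_iff (T : E →L[𝕜] F) (f : Dual 𝕜 F) :
    dualMap T f = 0 ↔ ∀ y ∈ Set.range T, f y = 0 := by
  rw [Set.forall_mem_range]
  exact ContinuousLinearMap.ext_iff

/-- `inclusionInDoubleDual`, typed with `Dual` in place of `StrongDual`. -/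
def toBidual : E →L[𝕜] Dual 𝕜 (Dual 𝕜 E) :=
  inclusionInDoubleDual 𝕜 E

theorem norm_toBidual_le : ‖(toBidual : E →L[𝕜] Dual 𝕜 (Dual 𝕜 E))‖ ≤ 1 :=
  inclusionInDoubleDual_norm_le 𝕜 E

/-- For `P` on `E**`, the operator `f ↦ (P* f)|_E` on `E*`, where `f ∈ E*` is viewed in `E***`. -/
def bidualRestrict (P : Dual 𝕜 (Dual 𝕜 E) →L[𝕜] Dual 𝕜 (Dual 𝕜 E)) :
    Dual 𝕜 E →L[𝕜] Dual 𝕜 E :=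
  (P.comp toBidual).flip

variable (P : Dual 𝕜 (Dual 𝕜 E) →L[𝕜] Dual 𝕜 (Dual 𝕜 E))

@[simp]
theorem bidualRestrict_apply (f : Dual 𝕜 E) (x : E) : bidualRestrict P f x = P (toBidual x) f :=
  rfl

theorem norm_bidualRestrict_le : ‖bidualRestrict P‖ ≤ ‖P‖ :=
  calc ‖bidualRestrict P‖ = ‖P.comp toBidual‖ := ContinuousLinearMap.opNorm_flip _
    _ ≤ ‖P‖ * ‖(toBidual : E →L[𝕜] Dual 𝕜 (Dual 𝕜 E))‖ := ContinuousLinearMap.opNorm_comp_le _ _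
    _ ≤ ‖P‖ * 1 := by gcongr; exact norm_toBidual_le
    _ = ‖P‖ := mul_one _

theorem bidualRestrict_apply_eq_zero {x : E} (hx : P (toBidual x) = 0) (f : Dual 𝕜 E) :
    bidualRestrict P f x = 0 := by
  rw [bidualRestrict_apply, hx]
  rfl

theorem bidualRestrict_eq_self (hP : ∀ G, P (P G) = P G) {f : Dual 𝕜 E}
    (hf : ∀ G, P G = 0 → G f = 0) : bidualRestrict P f = f := by
  refine ContinuousLinearMap.ext fun x => ?_
  have hker : P (toBidual x - P (toBidual x)) = 0 := by rw [map_sub, hP, sub_self]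
  have : f x - P (toBidual x) f = 0 := hf _ hker
  exact (sub_eq_zero.1 this).symm

end NormedSpace

end

open NormedSpace

theorem stmt17_general {Y : Type*} [NormedAddCommGroup Y] [NormedSpace ℂ Y]
    (X : Subspace ℂ Y) (β : ℝ) :
    (∃ P : Dual ℂ (Dual ℂ Y) →L[ℂ] Dual ℂ (Dual ℂ Y),
        (∀ F : Dual ℂ (Dual ℂ Y), P (P F) = P F) ∧ ‖P‖ ≤ β ∧
        (∀ F : Dual ℂ (Dual ℂ Y),
          P F = 0 ↔ ∀ f : Dual ℂ Y, (∀ x ∈ X, f x = 0) → F f = 0)) ↔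
    (∃ Q : Dual ℂ Y →L[ℂ] Dual ℂ Y,
        (∀ f : Dual ℂ Y, Q (Q f) = Q f) ∧ ‖Q‖ ≤ β ∧
        Set.range Q = {f : Dual ℂ Y | ∀ x ∈ X, f x = 0}) := by
  constructor
  · rintro ⟨P, hP, hPβ, hker⟩
    have hmaps (f : Dual ℂ Y) : ∀ x ∈ X, bidualRestrict P f x = 0 := fun x hx =>
      bidualRestrict_apply_eq_zero P ((hker _).2 fun g hg => hg x hx) f
    have hfix (f : Dual ℂ Y) (hf : ∀ x ∈ X, f x = 0) : bidualRestrict P f = f :=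
      bidualRestrict_eq_self P hP fun G hG => (hker G).1 hG f hf
    exact ⟨bidualRestrict P, fun f => hfix _ (hmaps f), (norm_bidualRestrict_le P).trans hPβ,
      (Set.range_subset_iff.2 hmaps).antisymm fun f hf => ⟨f, hfix f hf⟩⟩
  · rintro ⟨Q, hQ, hQβ, hrange⟩
    refine ⟨dualMap Q, dualMap_dualMap_of_idem hQ, (norm_dualMap_le Q).trans hQβ, fun F => ?_⟩
    rw [dualMap_eq_zero_iff, hrange]
    rfl

/-- Let `X` be a closed subspace of a complex Banach space `Y` and `β ≥ 1`.  Then there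
is a bounded projection `P` on `Y**` with `‖P‖ ≤ β` and kernel `X^⊥⊥` if and only if
there is a bounded projection `Q` on `Y*` with `‖Q‖ ≤ β` and range `X^⊥`. -/
theorem stmt17 {Y : Type*} [NormedAddCommGroup Y] [NormedSpace ℂ Y] [CompleteSpace Y]
    (X : Subspace ℂ Y) (hX : IsClosed (X : Set Y)) (β : ℝ) (hβ : 1 ≤ β) :
    (∃ P : Dual ℂ (Dual ℂ Y) →L[ℂ] Dual ℂ (Dual ℂ Y),
        (∀ F : Dual ℂ (Dual ℂ Y), P (P F) = P F) ∧ ‖P‖ ≤ β ∧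
        (∀ F : Dual ℂ (Dual ℂ Y),
          P F = 0 ↔ ∀ f : Dual ℂ Y, (∀ x ∈ X, f x = 0) → F f = 0)) ↔
    (∃ Q : Dual ℂ Y →L[ℂ] Dual ℂ Y,
        (∀ f : Dual ℂ Y, Q (Q f) = Q f) ∧ ‖Q‖ ≤ β ∧
        Set.range Q = {f : Dual ℂ Y | ∀ x ∈ X, f x = 0}) :=
  stmt17_general X β
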